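/- Let t be a trace and (ev_a, ev_b) an event-pair in t with ev_a.type = a_1, ev_b.type = a_2, ev_a.ts < ev_b.ts, constructed by the non-overlapping rule so that ev_b is the earliest event of type a_2 occurring after ev_a. If the pair violates a 'within v' time constraint, i.e., ev_b.ts − ev_a.ts > v, then any event ev_x of type a_1 with ev_a.ts < ev_x.ts < ev_b.ts and ev_b.ts − ev_x.ts ≤ v, if one exists, is recoverable from the index of et-pair (a_1,a_1): ev_x is a component of some indexed event-pair of type (a_1,a_1). Moreover, if t contains exactly one event of type a_1, then t contains no pair (ev_x, ev_y) with ev_x.type = a_1, ev_y.type = a_2, ev_x.ts < ev_y.ts ≤ ev_x.ts + v, and the trace can be safely pruned. -/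
import Mathlib


structure Event where
  type : ℕ
  ts : ℤ
deriving DecidableEq

lemma mem_zip_tail {α : Type*} : ∀ (l : List α), 2 ≤ l.length → ∀ x ∈ l,
    ∃ p ∈ l.zip l.tail, p.1 = x ∨ p.2 = x
  | [], hl, x, hx => by simp at hx
  | [a], hl, x, hx => by simp at hl
  | a :: b :: rest, hl, x, hx => by
    rcases List.mem_cons.mp hx with h | h
    · exact ⟨(a, b), by simp, Or.inl h.symm⟩
    · match rest with
      | [] =>
        simp only [List.mem_singleton, List.mem_cons, List.not_mem_nil, or_false] at h
        exact ⟨(a, b), by simp, Or.inr h.symm⟩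
      | c :: rest' =>
        obtain ⟨p, hp, hpx⟩ := mem_zip_tail (b :: c :: rest') (by simp) x h
        refine ⟨p, ?_, hpx⟩
        simp only [List.tail_cons, List.zip_cons_cons, List.mem_cons]
        right
        simpa using hp

/-- Let `(eva, evb)` be an event-pair in `t` produced by the non-overlapping
rule (`evb` is the earliest type-`a2` event after `eva`) that violates a `within v`
constraint.  Then (i) any type-`a1` event `evx` strictly between them with
`evb.ts - evx.ts ≤ v` is a component of some indexed `(a1,a1)` event-pair (consecutive
pairs of the type-`a1` subsequence), and (ii) if `t` contains exactly one event of type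
`a1`, then `t` contains no pair `(evx, evy)` of types `(a1,a2)` with
`evx.ts < evy.ts ≤ evx.ts + v`, so `t` can be safely pruned. -/
theorem stmt2 (t : List Event) (ht : t.Chain' (fun e1 e2 => e1.ts < e2.ts))
    (a1 a2 : ℕ) (v : ℤ)
    (eva evb : Event) (ha : eva ∈ t) (hb : evb ∈ t)
    (hta : eva.type = a1) (htb : evb.type = a2) (hlt : eva.ts < evb.ts)
    (hearliest : ∀ ev ∈ t, ev.type = a2 → eva.ts < ev.ts → evb.ts ≤ ev.ts)
    (hviol : v < evb.ts - eva.ts) :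
    (∀ evx ∈ t, evx.type = a1 → eva.ts < evx.ts → evx.ts < evb.ts →
      evb.ts - evx.ts ≤ v →
      ∃ p ∈ (t.filter (fun ev => decide (ev.type = a1))).zip
              (t.filter (fun ev => decide (ev.type = a1))).tail,
        p.1 = evx ∨ p.2 = evx) ∧
    ((t.filter (fun ev => decide (ev.type = a1))).length = 1 →
      ¬ ∃ evx ∈ t, ∃ evy ∈ t, evx.type = a1 ∧ evy.type = a2 ∧
          evx.ts < evy.ts ∧ evy.ts ≤ evx.ts + v) := by
  have hamem : eva ∈ t.filter (fun ev => decide (ev.type = a1)) := by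
    simp [List.mem_filter, ha, hta]
  constructor
  · intro evx hx htx hx1 hx2 hx3
    have hxmem : evx ∈ t.filter (fun ev => decide (ev.type = a1)) := by
      simp [List.mem_filter, hx, htx]
    have hne : eva ≠ evx := by
      intro h; rw [h] at hx1; exact lt_irrefl _ hx1
    have hlen : 2 ≤ (t.filter (fun ev => decide (ev.type = a1))).length := by
      rcases List.mem_iff_get.mp hamem with ⟨i, hi⟩
      rcases List.mem_iff_get.mp hxmem with ⟨j, hj⟩
      have hij : (i : ℕ) ≠ (j : ℕ) := by
        intro h; apply hne; rw [← hi, ← hj]; congr 1; exact Fin.ext h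
      have h1 := i.isLt
      have h2 := j.isLt
      omega
    exact mem_zip_tail _ hlen evx hxmem
  · rintro hlen ⟨evx, hx, evy, hy, htx, hty, h1, h2⟩
    have hxmem : evx ∈ t.filter (fun ev => decide (ev.type = a1)) := by
      simp [List.mem_filter, hx, htx]
    have heq : eva = evx := by
      rcases List.length_eq_one_iff.mp hlen with ⟨z, hz⟩
      rw [hz] at hamem hxmem
      simp at hamem hxmem
      rw [hamem, hxmem]
    have hb' := hearliest evy hy hty (heq ▸ h1)
    rw [← heq] at h2
    omega
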